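/- Monotone occupancy for the endpoint-sampling variant: let (ζ_t : t ≥ 0) be the process started from ζ_0 = {0}, where given ζ_t ≠ ∅, two points a and b are sampled independently and uniformly at random (with repetition) from ζ_t, the contraction is the interval ζ̃_t = {min(a,b), ..., max(a,b)}, and ζ_{t+1} = {L(ζ̃_t) − N^L_t, ..., R(ζ̃_t) + N^R_t} with (N^L_t), (N^R_t) independent geometric random variables with P(N = n) = (1−p)p^n, n ≥ 0. Then for every t ≥ 0 the occupancy function f_t(x) = P(x ∈ ζ_t) is even and decreasing in |x|. -/

import Mathlib

/- The standard specifications randomly fluctuating intervals process.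
States: `none` = empty set, `some (l, r)` with `l ≤ r` = the integer interval {l, ..., r}. -/

open MeasureTheory
open scoped ENNReal

namespace RFI

abbrev State := Option (ℤ × ℤ)

/-- Geometric distribution on ℕ: P(N = n) = (1 - p) * p ^ n. -/
noncomputable def geom (p : ℝ≥0∞) (hp : p < 1) : PMF ℕ :=
  ⟨fun n => (1 - p) * p ^ n, by
    refine ENNReal.summable.hasSum_iff.mpr ?_
    rw [ENNReal.tsum_mul_left, ENNReal.tsum_geometric]
    exact ENNReal.mul_inv_cancel
      (fun h => (not_le.mpr hp) (tsub_eq_zero_iff_le.mp h))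
      (lt_of_le_of_lt tsub_le_self ENNReal.one_lt_top).ne⟩

/-- `x` is occupied, i.e. belongs to the interval represented by the state. -/
def memS (x : ℤ) : State → Prop
  | none => False
  | some (l, r) => l ≤ x ∧ x ≤ r

/-- Transition kernel of the endpoint-sampling variant: two points `a`, `b` are
sampled independently and uniformly (with repetition) from the current interval,
the contraction is {min a b, ..., max a b}, and then the endpoints are expanded
by independent geometric amounts. -/
noncomputable def stepEnd (p : ℝ≥0∞) (hp : p < 1) : State → PMF State
  | none => PMF.pure none
  | some (l, r) =>
      if h : l ≤ r then
        (PMF.uniformOfFinset (Finset.Icc l r) (Finset.nonempty_Icc.mpr h)).bind fun a =>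
          (PMF.uniformOfFinset (Finset.Icc l r) (Finset.nonempty_Icc.mpr h)).bind fun b =>
            (geom p hp).bind fun nL =>
              (geom p hp).bind fun nR =>
                PMF.pure (some (min a b - nL, max a b + nR))
      else PMF.pure none

/-- Distribution at time `t` of the endpoint-sampling process started from `init`. -/
noncomputable def distEnd (p : ℝ≥0∞) (hp : p < 1) (init : State) : ℕ → PMF State
  | 0 => PMF.pure init
  | t + 1 => (distEnd p hp init t).bind (stepEnd p hp)

/-- Occupancy function of the endpoint-sampling process started from {0}. -/
noncomputable def occEnd (p : ℝ≥0∞) (hp : p < 1) (t : ℕ) (x : ℤ) : ℝ≥0∞ :=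
  (distEnd p hp (some (0, 0)) t).toOuterMeasure {s | memS x s}

/-!
Write `q_t(s) = P(ζ_t = s)` for intervals `s`. By induction on `t`, `q_t` is invariant under the
reflection `s ↦ -s` and does not increase when `s` is reflected about `-1/2` away from the origin.
The transition kernel `K(s, I)` is invariant under every reflection, and up to the factor `|s|⁻²`
it only sees the overlap `s ∩ I`; reflecting `s` about `-1/2` shrinks this overlap when the centres
of `s` and `I` are at least `-1/2`. Pairing each `s` with its reflection, the rearrangement
inequality then carries the monotonicity from `q_t` over to `q_{t+1}`.
The occupancy claim follows from the same pairing argument, with the reflection about `x + 1/2`,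
which exchanges the intervals containing `x` and those containing `x + 1`.
-/

open Finset

/-- Unlike `mul_add_mul_le_mul_add_mul'`, this needs no additive cancellation, which fails at `⊤`. -/
theorem ENNReal.mul_add_mul_le_mul_add_mul' {a b c d : ℝ≥0∞} (hba : b ≤ a) (hdc : d ≤ c) :
    a * d + b * c ≤ a * c + b * d := by
  obtain ⟨a, rfl⟩ := exists_add_of_le hba
  obtain ⟨c, rfl⟩ := exists_add_of_le hdc
  calc (b + a) * d + b * (d + c) = b * d + b * c + (b * d + a * d) := by ring
    _ ≤ b * d + b * c + (b * d + a * d) + a * c := le_self_add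
    _ = (b + a) * (d + c) + b * d := by ring

theorem ENNReal.tsum_comp_mul_le_of_involutive {α : Type*} {σ : α → α}
    (hσ : Function.Involutive σ) {P : α → Prop} (hP : ∀ a, P a ∨ P (σ a)) {f g : α → ℝ≥0∞}
    (hf : ∀ a, P a → f (σ a) ≤ f a) (hg : ∀ a, P a → g (σ a) ≤ g a) :
    ∑' a, f (σ a) * g a ≤ ∑' a, f a * g a := by
  have reindex (h : α → ℝ≥0∞) : ∑' a, h (σ a) = ∑' a, h a := (hσ.toPerm σ).tsum_eq h
  have pair (a : α) : f (σ a) * g a + f a * g (σ a) ≤ f a * g a + f (σ a) * g (σ a) := by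
    rcases hP a with h | h
    · rw [add_comm]
      exact ENNReal.mul_add_mul_le_mul_add_mul' (hf a h) (hg a h)
    · have := ENNReal.mul_add_mul_le_mul_add_mul' (hf _ h) (hg _ h)
      rwa [hσ a, add_comm (f (σ a) * g (σ a))] at this
  rw [← ENNReal.mul_le_mul_iff_right two_ne_zero ENNReal.ofNat_ne_top, two_mul, two_mul]
  calc ∑' a, f (σ a) * g a + ∑' a, f (σ a) * g a
      = ∑' a, f (σ a) * g a + ∑' a, f a * g (σ a) := by
        rw [← reindex fun a => f a * g (σ a), funext fun a => congrArg (f (σ a) * g ·) (hσ a)]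
    _ = ∑' a, (f (σ a) * g a + f a * g (σ a)) := ENNReal.tsum_add.symm
    _ ≤ ∑' a, (f a * g a + f (σ a) * g (σ a)) := ENNReal.tsum_le_tsum pair
    _ = ∑' a, f a * g a + ∑' a, f a * g a := by
        rw [ENNReal.tsum_add, reindex fun a => f a * g a]

theorem tsum_option_eq_of_none {α M : Type*} [AddCommMonoid M] [TopologicalSpace M]
    {f : Option α → M} (h : f none = 0) : ∑' o, f o = ∑' a, f (some a) := by
  refine (Option.some_injective _ |>.tsum_eq fun o ho => ?_).symm
  cases o with
  | none => exact absurd h ho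
  | some a => exact ⟨a, rfl⟩

theorem PMF.uniformOfFinset_bind_apply {α β : Type*} {s : Finset α} (hs : s.Nonempty)
    (F : α → PMF β) (x : β) :
    (PMF.uniformOfFinset s hs).bind F x = ∑ a ∈ s, (#s : ℝ≥0∞)⁻¹ * F a x := by
  rw [PMF.bind_apply, tsum_eq_sum fun a ha => by
    rw [PMF.uniformOfFinset_apply_of_notMem hs ha, zero_mul]]
  exact sum_congr rfl fun a ha => by rw [PMF.uniformOfFinset_apply_of_mem hs ha]

theorem sum_Icc_const_sub {M : Type*} [AddCommMonoid M] (c u v : ℤ) (f : ℤ → M) :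
    ∑ a ∈ Icc (c - v) (c - u), f a = ∑ a ∈ Icc u v, f (c - a) := by
  refine sum_nbij' (c - ·) (c - ·) ?_ ?_ ?_ ?_ ?_ <;> intro a ha
  · simp only [mem_Icc] at *; omega
  · simp only [mem_Icc] at *; omega
  · exact sub_sub_cancel c a
  · exact sub_sub_cancel c a
  · rw [sub_sub_cancel]

/-- The reflection of the interval `{s.1, …, s.2}` about `c / 2`. -/
def reflectAt (c : ℤ) (s : ℤ × ℤ) : ℤ × ℤ := (c - s.2, c - s.1)

theorem reflectAt_involutive (c : ℤ) : Function.Involutive (reflectAt c) := fun s => by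
  simp [reflectAt]

theorem card_Icc_reflectAt (c : ℤ) (s : ℤ × ℤ) :
    #(Icc (reflectAt c s).1 (reflectAt c s).2) = #(Icc s.1 s.2) := by
  simp only [reflectAt, Int.card_Icc]
  omega

/-- `P(N = k)` for `N ~ geom p`, extended by `0` to negative `k`. -/
noncomputable def geomZ (p : ℝ≥0∞) (k : ℤ) : ℝ≥0∞ := if 0 ≤ k then (1 - p) * p ^ k.toNat else 0

theorem geomZ_of_neg {p : ℝ≥0∞} {k : ℤ} (hk : k < 0) : geomZ p k = 0 := if_neg (by omega)

theorem geomZ_mul_geomZ {p : ℝ≥0∞} {a b a' b' : ℤ} (ha : 0 ≤ a) (hb : 0 ≤ b) (ha' : 0 ≤ a')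
    (hb' : 0 ≤ b') (hab : a + b = a' + b') :
    geomZ p a * geomZ p b = geomZ p a' * geomZ p b' := by
  have hexp : a.toNat + b.toNat = a'.toNat + b'.toNat := by omega
  simp only [geomZ, if_pos ha, if_pos hb, if_pos ha', if_pos hb']
  calc (1 - p) * p ^ a.toNat * ((1 - p) * p ^ b.toNat)
      = (1 - p) * (1 - p) * p ^ (a.toNat + b.toNat) := by ring
    _ = (1 - p) * p ^ a'.toNat * ((1 - p) * p ^ b'.toNat) := by rw [hexp]; ring

theorem tsum_geom_mul_ite {p : ℝ≥0∞} (hp : p < 1) (k : ℤ) (x : ℝ≥0∞) :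
    ∑' n : ℕ, geom p hp n * (if (n : ℤ) = k then x else 0) = geomZ p k * x := by
  rcases lt_or_ge k 0 with hk | hk
  · simp [geomZ_of_neg hk, show ∀ n : ℕ, (n : ℤ) ≠ k by omega]
  · lift k to ℕ using hk
    simp only [Nat.cast_inj, mul_ite, mul_zero, tsum_ite_eq, geomZ, Nat.cast_nonneg, if_true,
      Int.toNat_natCast]
    rfl

/-- The probability that the contraction `{min a b, …, max a b}` expands to exactly `I`. -/
noncomputable def expandWeight (p : ℝ≥0∞) (I : ℤ × ℤ) (a b : ℤ) : ℝ≥0∞ :=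
  geomZ p (min a b - I.1) * geomZ p (I.2 - max a b)

theorem expandWeight_reflectAt (p : ℝ≥0∞) (c : ℤ) (I : ℤ × ℤ) (a b : ℤ) :
    expandWeight p (reflectAt c I) (c - a) (c - b) = expandWeight p I a b := by
  rw [expandWeight, expandWeight, reflectAt, min_sub_sub_left, max_sub_sub_left, mul_comm]
  congr 2 <;> ring

theorem expandWeight_eq_zero {p : ℝ≥0∞} {I : ℤ × ℤ} {a b : ℤ}
    (h : a ∉ Icc I.1 I.2 ∨ b ∉ Icc I.1 I.2) : expandWeight p I a b = 0 := by
  simp only [mem_Icc] at h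
  rcases (by omega : min a b - I.1 < 0 ∨ I.2 - max a b < 0) with h | h
  · rw [expandWeight, geomZ_of_neg h, zero_mul]
  · rw [expandWeight, geomZ_of_neg h, mul_zero]

theorem expandWeight_add_right {p : ℝ≥0∞} {I : ℤ × ℤ} {a b k : ℤ} (ha : a ∈ Icc I.1 I.2)
    (hb : b ∈ Icc I.1 I.2) (hak : a + k ∈ Icc I.1 I.2) (hbk : b + k ∈ Icc I.1 I.2) :
    expandWeight p I (a + k) (b + k) = expandWeight p I a b := by
  simp only [mem_Icc] at ha hb hak hbk
  exact geomZ_mul_geomZ (by omega) (by omega) (by omega) (by omega) (by omega)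

theorem sum_expandWeight_Icc_eq_inter (p : ℝ≥0∞) (I : ℤ × ℤ) (u v : ℤ) :
    ∑ a ∈ Icc u v, ∑ b ∈ Icc u v, expandWeight p I a b
      = ∑ a ∈ Icc (max u I.1) (min v I.2), ∑ b ∈ Icc (max u I.1) (min v I.2),
          expandWeight p I a b := by
  have hsub : Icc (max u I.1) (min v I.2) ⊆ Icc u v :=
    Icc_subset_Icc (le_max_left _ _) (min_le_left _ _)
  have hout : ∀ a ∈ Icc u v, a ∉ Icc (max u I.1) (min v I.2) → a ∉ Icc I.1 I.2 := by
    intro a ha ha'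
    simp only [mem_Icc] at *
    omega
  symm
  calc ∑ a ∈ Icc (max u I.1) (min v I.2), ∑ b ∈ Icc (max u I.1) (min v I.2), expandWeight p I a b
      = ∑ a ∈ Icc (max u I.1) (min v I.2), ∑ b ∈ Icc u v, expandWeight p I a b :=
        sum_congr rfl fun a _ => sum_subset hsub fun b hb hb' =>
          expandWeight_eq_zero (.inr (hout b hb hb'))
    _ = ∑ a ∈ Icc u v, ∑ b ∈ Icc u v, expandWeight p I a b :=
        sum_subset hsub fun a ha ha' =>
          sum_eq_zero fun b _ => expandWeight_eq_zero (.inl (hout a ha ha'))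

theorem sum_expandWeight_Icc_le (p : ℝ≥0∞) {I : ℤ × ℤ} {u v u' v' : ℤ} (hu : I.1 ≤ u)
    (hv : v ≤ I.2) (hu' : I.1 ≤ u') (hv' : v' ≤ I.2) (hlen : v - u ≤ v' - u') :
    ∑ a ∈ Icc u v, ∑ b ∈ Icc u v, expandWeight p I a b
      ≤ ∑ a ∈ Icc u' v', ∑ b ∈ Icc u' v', expandWeight p I a b := by
  set k := u' - u
  have hmem : ∀ a ∈ Icc u v, a ∈ Icc I.1 I.2 ∧ a + k ∈ Icc I.1 I.2 := by
    intro a ha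
    simp only [mem_Icc] at *
    omega
  have hshift : ∑ a ∈ Icc u v, ∑ b ∈ Icc u v, expandWeight p I a b
      = ∑ a ∈ Icc (u + k) (v + k), ∑ b ∈ Icc (u + k) (v + k), expandWeight p I a b := by
    simp only [← map_add_right_Icc, sum_map, addRightEmbedding_apply]
    refine sum_congr rfl fun a ha => sum_congr rfl fun b hb => ?_
    exact (expandWeight_add_right (hmem a ha).1 (hmem b hb).1 (hmem a ha).2 (hmem b hb).2).symm
  have hsub : Icc (u + k) (v + k) ⊆ Icc u' v' := Icc_subset_Icc (by omega) (by omega)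
  rw [hshift]
  exact (sum_le_sum fun a _ => sum_le_sum_of_subset hsub).trans (sum_le_sum_of_subset hsub)

section Kernel

variable {p : ℝ≥0∞} {hp : p < 1}

theorem geom_bind_geom_bind_pure_apply (m M : ℤ) (I : ℤ × ℤ) :
    ((geom p hp).bind fun nL => (geom p hp).bind fun nR =>
        PMF.pure (some (m - nL, M + nR) : State)) (some I)
      = geomZ p (m - I.1) * geomZ p (I.2 - M) := by
  have hpure (nL nR : ℕ) : (PMF.pure (some (m - nL, M + nR) : State)) (some I)
      = if (nR : ℤ) = I.2 - M then (if (nL : ℤ) = m - I.1 then 1 else 0) else 0 := by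
    rw [PMF.pure_apply]
    simp only [Option.some.injEq, Prod.ext_iff]
    split_ifs <;> first | rfl | omega
  simp only [PMF.bind_apply, hpure, tsum_geom_mul_ite, mul_left_comm _ (geomZ p _),
    ENNReal.tsum_mul_left, mul_one]
  exact mul_comm _ _

theorem stepEnd_some_apply_some (s I : ℤ × ℤ) :
    stepEnd p hp (some s) (some I) = (#(Icc s.1 s.2) : ℝ≥0∞)⁻¹ ^ 2 *
      ∑ a ∈ Icc s.1 s.2, ∑ b ∈ Icc s.1 s.2, expandWeight p I a b := by
  obtain ⟨l, r⟩ := s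
  by_cases h : l ≤ r
  · simp only [stepEnd, dif_pos h, PMF.uniformOfFinset_bind_apply,
      geom_bind_geom_bind_pure_apply, mul_sum, sq, mul_assoc, expandWeight]
  · simp [stepEnd, dif_neg h, Icc_eq_empty_of_lt (not_le.mp h)]

theorem stepEnd_reflectAt (c : ℤ) (s I : ℤ × ℤ) :
    stepEnd p hp (some (reflectAt c s)) (some (reflectAt c I))
      = stepEnd p hp (some s) (some I) := by
  rw [stepEnd_some_apply_some, stepEnd_some_apply_some, card_Icc_reflectAt]
  have hweight (a b : ℤ) : expandWeight p (c - I.2, c - I.1) (c - a) (c - b)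
      = expandWeight p I a b := expandWeight_reflectAt p c I a b
  simp only [reflectAt, sum_Icc_const_sub, hweight]

/-- Reflecting `s` about `-1/2` keeps its length and shrinks its overlap with `I`. -/
theorem stepEnd_reflectAt_neg_one_le {s I : ℤ × ℤ} (hs : -1 ≤ s.1 + s.2)
    (hI : -1 ≤ I.1 + I.2) :
    stepEnd p hp (some (reflectAt (-1) s)) (some I) ≤ stepEnd p hp (some s) (some I) := by
  rw [stepEnd_some_apply_some, stepEnd_some_apply_some, card_Icc_reflectAt,
    sum_expandWeight_Icc_eq_inter p I (reflectAt (-1) s).1, sum_expandWeight_Icc_eq_inter p I s.1]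
  refine mul_le_mul_right ?_ _
  exact sum_expandWeight_Icc_le p (le_max_right _ _) (min_le_right _ _) (le_max_right _ _)
    (min_le_right _ _) (by simp only [reflectAt]; omega)

end Kernel

section IntervalLaw

variable {p : ℝ≥0∞} {hp : p < 1}

noncomputable def intervalProb (p : ℝ≥0∞) (hp : p < 1) (t : ℕ) (s : ℤ × ℤ) : ℝ≥0∞ :=
  distEnd p hp (some (0, 0)) t (some s)

theorem intervalProb_succ (t : ℕ) (I : ℤ × ℤ) :
    intervalProb p hp (t + 1) I
      = ∑' s, intervalProb p hp t s * stepEnd p hp (some s) (some I) := by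
  rw [intervalProb, distEnd, PMF.bind_apply, tsum_option_eq_of_none]
  · rfl
  · simp [stepEnd]

theorem intervalProb_succ_reflectAt (c : ℤ) (t : ℕ) (I : ℤ × ℤ) :
    intervalProb p hp (t + 1) (reflectAt c I)
      = ∑' s, intervalProb p hp t (reflectAt c s) * stepEnd p hp (some s) (some I) := by
  rw [intervalProb_succ, ← ((reflectAt_involutive c).toPerm _).tsum_eq]
  simp only [Function.Involutive.coe_toPerm, stepEnd_reflectAt]

theorem intervalProb_reflectAt_zero_and_neg_one (t : ℕ) :
    (∀ s, intervalProb p hp t (reflectAt 0 s) = intervalProb p hp t s) ∧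
      ∀ s, -1 ≤ s.1 + s.2 → intervalProb p hp t (reflectAt (-1) s) ≤ intervalProb p hp t s := by
  induction t with
  | zero =>
    refine ⟨fun s => ?_, fun s hs => ?_⟩
    · simp only [intervalProb, distEnd, PMF.pure_apply, Option.some.injEq, reflectAt,
        Prod.ext_iff]
      congr 1
      simp only [eq_iff_iff]
      omega
    · simp only [intervalProb, distEnd, PMF.pure_apply, Option.some.injEq, reflectAt,
        Prod.ext_iff]
      rw [if_neg (by omega)]
      exact zero_le
  | succ t ih =>
    refine ⟨fun I => ?_, fun I hI => ?_⟩
    · rw [intervalProb_succ_reflectAt, intervalProb_succ]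
      simp only [ih.1]
    · rw [intervalProb_succ_reflectAt, intervalProb_succ]
      refine ENNReal.tsum_comp_mul_le_of_involutive (reflectAt_involutive (-1))
        (P := fun s => -1 ≤ s.1 + s.2) (fun s => ?_) ih.2
        fun s hs => stepEnd_reflectAt_neg_one_le hs hI
      simp only [reflectAt]
      omega

variable {t : ℕ}

theorem intervalProb_add_le {s : ℤ × ℤ} (hs : 0 ≤ s.1 + s.2) {k : ℤ} (hk : 0 ≤ k) :
    intervalProb p hp t (s.1 + k, s.2 + k) ≤ intervalProb p hp t s := by
  induction k, hk using Int.leInduction with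
  | base => simp
  | succ k hk ih =>
    have hshift : (s.1 + (k + 1), s.2 + (k + 1))
        = reflectAt 0 (reflectAt (-1) (s.1 + k, s.2 + k)) := by
      simp only [reflectAt, Prod.ext_iff]
      omega
    rw [hshift, (intervalProb_reflectAt_zero_and_neg_one t).1]
    exact ((intervalProb_reflectAt_zero_and_neg_one t).2 _ (by simp only; omega)).trans ih

theorem intervalProb_le_of_abs_le {s s' : ℤ × ℤ} (hlen : s'.2 - s'.1 = s.2 - s.1)
    (habs : |s.1 + s.2| ≤ |s'.1 + s'.2|) : intervalProb p hp t s' ≤ intervalProb p hp t s := by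
  have hsymm := (intervalProb_reflectAt_zero_and_neg_one (p := p) (hp := hp) t).1
  have habs_reflect (s : ℤ × ℤ) : |(reflectAt 0 s).1 + (reflectAt 0 s).2| = |s.1 + s.2| := by
    rw [← abs_neg]
    simp only [reflectAt]
    ring_nf
  wlog hs : 0 ≤ s.1 + s.2 generalizing s
  · rw [← hsymm s]
    exact this (by simp only [reflectAt]; omega) (by rwa [habs_reflect])
      (by simp only [reflectAt]; omega)
  wlog hs' : 0 ≤ s'.1 + s'.2 generalizing s'
  · rw [← hsymm s']
    exact this (by simp only [reflectAt]; omega) (by rwa [habs_reflect])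
      (by simp only [reflectAt]; omega)
  rw [abs_of_nonneg hs, abs_of_nonneg hs'] at habs
  have hs'_eq : s' = (s.1 + (s'.1 - s.1), s.2 + (s'.1 - s.1)) := by
    ext <;> simp only <;> omega
  rw [hs'_eq]
  exact intervalProb_add_le hs (by omega)

end IntervalLaw

section Occupancy

variable {p : ℝ≥0∞} {hp : p < 1} {t : ℕ}

theorem occEnd_eq_tsum (x : ℤ) :
    occEnd p hp t x
      = ∑' s : ℤ × ℤ, intervalProb p hp t s * if s.1 ≤ x ∧ x ≤ s.2 then 1 else 0 := by
  rw [occEnd, PMF.toOuterMeasure_apply, tsum_option_eq_of_none (by simp [memS])]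
  refine tsum_congr fun s => ?_
  by_cases h : s.1 ≤ x ∧ x ≤ s.2
  · rw [Set.indicator_of_mem (s := {o | memS x o}) (a := some s) h, if_pos h, mul_one]
    rfl
  · rw [Set.indicator_of_notMem (s := {o | memS x o}) (a := some s) h, if_neg h, mul_zero]

theorem occEnd_neg (x : ℤ) : occEnd p hp t (-x) = occEnd p hp t x := by
  rw [occEnd_eq_tsum, occEnd_eq_tsum, ← ((reflectAt_involutive 0).toPerm _).tsum_eq]
  refine tsum_congr fun s => ?_
  rw [Function.Involutive.coe_toPerm, (intervalProb_reflectAt_zero_and_neg_one t).1]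
  congr 1
  simp only [reflectAt]
  exact if_congr (by omega) rfl rfl

theorem occEnd_add_one_le {x : ℤ} (hx : 0 ≤ x) : occEnd p hp t (x + 1) ≤ occEnd p hp t x := by
  rw [occEnd_eq_tsum, occEnd_eq_tsum, ← ((reflectAt_involutive (2 * x + 1)).toPerm _).tsum_eq]
  have hmem (s : ℤ × ℤ) : (reflectAt (2 * x + 1) s).1 ≤ x + 1 ∧ x + 1 ≤ (reflectAt (2 * x + 1) s).2
      ↔ s.1 ≤ x ∧ x ≤ s.2 := by
    simp only [reflectAt]
    omega
  simp only [Function.Involutive.coe_toPerm, hmem]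
  refine ENNReal.tsum_comp_mul_le_of_involutive (reflectAt_involutive (2 * x + 1))
    (P := fun s => s.1 + s.2 ≤ 2 * x + 1) (fun s => ?_) (fun s hs => ?_) (fun s hs => ?_)
  · simp only [reflectAt]
    omega
  · exact intervalProb_le_of_abs_le (by simp only [reflectAt]; omega)
      (abs_le_abs (by simp only [reflectAt]; omega) (by simp only [reflectAt]; omega))
  · have himp : (reflectAt (2 * x + 1) s).1 ≤ x ∧ x ≤ (reflectAt (2 * x + 1) s).2
        → s.1 ≤ x ∧ x ≤ s.2 := by
      simp only [reflectAt] at hs ⊢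
      omega
    by_cases h : (reflectAt (2 * x + 1) s).1 ≤ x ∧ x ≤ (reflectAt (2 * x + 1) s).2
    · rw [if_pos h, if_pos (himp h)]
    · rw [if_neg h]
      exact zero_le

theorem occEnd_le_of_le {x y : ℤ} (hx : 0 ≤ x) (hxy : x ≤ y) :
    occEnd p hp t y ≤ occEnd p hp t x := by
  induction y, hxy using Int.leInduction with
  | base => exact le_rfl
  | succ y hxy ih => exact (occEnd_add_one_le (hx.trans hxy)).trans ih

theorem occEnd_abs (x : ℤ) : occEnd p hp t |x| = occEnd p hp t x := by
  rcases abs_choice x with h | h <;> rw [h]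
  exact occEnd_neg x

end Occupancy

theorem occupancy_even_and_decreasing_endpoint_general (p : ℝ≥0∞)
    (hp1 : p < 1) (t : ℕ) :
    (∀ x : ℤ, occEnd p hp1 t x = occEnd p hp1 t (-x)) ∧
    (∀ x y : ℤ, |x| ≤ |y| → occEnd p hp1 t y ≤ occEnd p hp1 t x) := by
  refine ⟨fun x => (occEnd_neg x).symm, fun x y hxy => ?_⟩
  rw [← occEnd_abs x, ← occEnd_abs y]
  exact occEnd_le_of_le (abs_nonneg x) hxy

/-- monotone occupancy for the endpoint-sampling variant: the
occupancy function of the process started from {0} is even and decreasing in |x|. -/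
theorem occupancy_even_and_decreasing_endpoint (p : ℝ≥0∞) (hp0 : 0 < p)
    (hp1 : p < 1) (t : ℕ) :
    (∀ x : ℤ, occEnd p hp1 t x = occEnd p hp1 t (-x)) ∧
    (∀ x y : ℤ, |x| ≤ |y| → occEnd p hp1 t y ≤ occEnd p hp1 t x) :=
  occupancy_even_and_decreasing_endpoint_general p hp1 t

end RFI
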